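/- Under the assumptions of the anchored pointwise error theorem but with condition (iii) replaced by: the top-k average of the per-sample losses ℓ^near_j := (1/R)·max{(ỹ_j − ỹ_{i⁺(j)})₊, (ỹ_{i⁻(j)} − ỹ_j)₊} over j ∉ S is at most δ, the pointwise error satisfies max_{j∈[N]} |ỹ_j − y_j| ≤ ε + η + R·k·δ. -/

import Mathlib

/-!
A non-anchor `j` is bracketed by anchors `im j` and `ip j` whose true values lie within `η` of
`y j` and whose estimates lie within `ε` of the truth; its hinge loss, rescaled by `R`, bounds how
far `ty j` overshoots `ty (ip j)` or undershoots `ty (im j)`. Since the losses are sorted, each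
one is at most the largest, hence at most the top-`k` sum `k δ`, and the triangle inequality
gives `ε + η + R k δ`.
-/

theorem Antitone.le_sum_castLE {α : Type*} [AddCommMonoid α] [PartialOrder α]
    [IsOrderedAddMonoid α] {n k : ℕ} {L : Fin n → α} (hL : Antitone L) (h0 : ∀ r, 0 ≤ L r)
    (hk : 1 ≤ k) (hkn : k ≤ n) (r : Fin n) :
    L r ≤ ∑ s : Fin k, L (Fin.castLE hkn s) :=
  calc L r ≤ L (Fin.castLE hkn ⟨0, hk⟩) := hL (by simp [Fin.le_def])
    _ ≤ ∑ s : Fin k, L (Fin.castLE hkn s) :=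
      Finset.single_le_sum (fun s _ => h0 _) (Finset.mem_univ _)

theorem abs_sub_le_of_bracketed {t u tm um tp up ε η M : ℝ}
    (hm : |tm - um| ≤ ε) (hp : |tp - up| ≤ ε) (hgm : u - um ≤ η) (hgp : up - u ≤ η)
    (hdown : tm - t ≤ M) (hup : t - tp ≤ M) :
    |t - u| ≤ ε + η + M := by
  rw [abs_le] at hm hp ⊢
  constructor <;> linarith [hm.1, hp.2]

theorem anchored_pointwise_error_bound_topk_general
    (N : ℕ) (y ty : Fin N → ℝ) (S : Finset (Fin N))
    (im ip : Fin N → Fin N) (ε η R δ : ℝ)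
    (hR : 0 < R) (hη : 0 ≤ η)
    (hanchor : ∀ i ∈ S, |ty i - y i| ≤ ε)
    (hcover : ∀ j ∉ S, im j ∈ S ∧ ip j ∈ S ∧
      y (im j) ≤ y j ∧ y j ≤ y (ip j) ∧
      y j - y (im j) ≤ η ∧ y (ip j) - y j ≤ η)
    -- g enumerates the non-anchors in order of decreasing per-sample loss L
    (n : ℕ) (g : Fin n → Fin N)
    (hgsurj : ∀ j ∉ S, ∃ r, g r = j)
    (L : Fin n → ℝ)
    (hL : ∀ r, L r = (1 / R) *
      max (max 0 (ty (g r) - ty (ip (g r)))) (max 0 (ty (im (g r)) - ty (g r))))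
    (hsorted : Antitone L)
    (k : ℕ) (hk1 : 1 ≤ k) (hkn : k ≤ n)
    (htopk : (1 / (k : ℝ)) * ∑ r : Fin k, L (Fin.castLE hkn r) ≤ δ) :
    ∀ j, |ty j - y j| ≤ ε + η + R * (k : ℝ) * δ := by
  have hL0 : ∀ r, 0 ≤ L r := fun r => by rw [hL]; positivity
  have hsum : ∑ r : Fin k, L (Fin.castLE hkn r) ≤ k * δ := by
    rwa [one_div_mul_eq_div, div_le_iff₀' (by exact_mod_cast hk1)] at htopk
  have hLk : ∀ r, R * L r ≤ R * k * δ := fun r => by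
    rw [mul_assoc]
    exact mul_le_mul_of_nonneg_left ((hsorted.le_sum_castLE hL0 hk1 hkn r).trans hsum) hR.le
  intro j
  by_cases hj : j ∈ S
  · have hRkδ : 0 ≤ R * k * δ := (mul_nonneg hR.le (hL0 ⟨0, by omega⟩)).trans (hLk _)
    linarith [hanchor j hj]
  obtain ⟨r, rfl⟩ := hgsurj j hj
  obtain ⟨hm, hp, -, -, hgm, hgp⟩ := hcover _ hj
  have hloss : R * L r = max (max 0 (ty (g r) - ty (ip (g r))))
      (max 0 (ty (im (g r)) - ty (g r))) := by
    rw [hL, ← mul_assoc, mul_one_div_cancel hR.ne', one_mul]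
  refine abs_sub_le_of_bracketed (hanchor _ hm) (hanchor _ hp) hgm hgp ?_ ?_
  · exact (le_max_right _ _).trans ((le_max_right _ _).trans (hloss ▸ hLk r))
  · exact (le_max_right _ _).trans ((le_max_left _ _).trans (hloss ▸ hLk r))

/-- Anchored pointwise error bound with top-k surrogate: if the top-k average of
the per-sample anchored hinge losses ℓ^near over the non-anchors is at most δ,
then the pointwise error is at most ε + η + R·k·δ. -/
theorem anchored_pointwise_error_bound_topk
    (N : ℕ) (y ty : Fin N → ℝ) (S : Finset (Fin N))
    (im ip : Fin N → Fin N) (ε η R δ : ℝ)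
    (hR : 0 < R) (hη : 0 ≤ η) (hδ : 0 ≤ δ)
    (hanchor : ∀ i ∈ S, |ty i - y i| ≤ ε)
    (hcover : ∀ j ∉ S, im j ∈ S ∧ ip j ∈ S ∧
      y (im j) ≤ y j ∧ y j ≤ y (ip j) ∧
      y j - y (im j) ≤ η ∧ y (ip j) - y j ≤ η)
    -- g enumerates the non-anchors in order of decreasing per-sample loss L
    (n : ℕ) (g : Fin n → Fin N)
    (hginj : Function.Injective g) (hgmem : ∀ r, g r ∉ S)
    (hgsurj : ∀ j ∉ S, ∃ r, g r = j)
    (L : Fin n → ℝ)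
    (hL : ∀ r, L r = (1 / R) *
      max (max 0 (ty (g r) - ty (ip (g r)))) (max 0 (ty (im (g r)) - ty (g r))))
    (hsorted : Antitone L)
    (k : ℕ) (hk1 : 1 ≤ k) (hkn : k ≤ n)
    (htopk : (1 / (k : ℝ)) * ∑ r : Fin k, L (Fin.castLE hkn r) ≤ δ) :
    ∀ j, |ty j - y j| ≤ ε + η + R * (k : ℝ) * δ :=
  anchored_pointwise_error_bound_topk_general N y ty S im ip ε η R δ hR hη hanchor hcover n g hgsurj
    L hL hsorted k hk1 hkn htopk
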